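/- arXiv:2303.15556 — 7 statements merged into one kernel-verified Lean document; each statement's English description precedes it below -/
import Mathlib

section
/- Let G be a finite graph, let the species set be {A, B, C}, and let the only reaction rule be A + B → C + A. Let s and t be cells of G. Let I be the configuration with species A at cell s and species B at every other cell, and let T be the configuration with species A at cell t and species C at every other cell. Then T is reachable from I if and only if G has a Hamiltonian path from s to t (a path visiting every vertex of G exactly once, starting at s and ending at t). -/
/-- Species set {A, B, C}. -/
inductive Species : Type
  | A | B | C
  deriving DecidableEq

/-- One application of a reaction rule `(a, b, c, d)` (meaning `a + b → c + d`) from the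
rule set `R` on an ordered pair of adjacent cells of the surface `G`. -/
def Step {V S : Type*} [DecidableEq V] (G : SimpleGraph V) (R : Set (S × S × S × S))
    (I T : V → S) : Prop :=
  ∃ u v r, r ∈ R ∧ G.Adj u v ∧ I u = r.1 ∧ I v = r.2.1 ∧
    T = Function.update (Function.update I u r.2.2.1) v r.2.2.2

/-- `T` is reachable from `I` by a finite sequence of rule applications. -/
def Reaches {V S : Type*} [DecidableEq V] (G : SimpleGraph V) (R : Set (S × S × S × S))
    (I T : V → S) : Prop :=
  Relation.ReflTransGen (Step G R) I T

namespace CRNAux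

/-- The single rule `A + B → C + A`. -/
def rule : Set (Species × Species × Species × Species) :=
  {(Species.A, Species.B, Species.C, Species.A)}

variable {V : Type*} [DecidableEq V] {G : SimpleGraph V}

/-- Configuration associated to a walk: `A` at the endpoint, `C` on other visited
cells, `B` on unvisited cells. -/
def conf {s x : V} (p : G.Walk s x) : V → Species :=
  fun v => if v = x then Species.A else if v ∈ p.support then Species.C else Species.B

lemma conf_nil (s : V) : conf (SimpleGraph.Walk.nil : G.Walk s s) =
    fun v => if v = s then Species.A else Species.B := by
  funext v
  by_cases h : v = s <;> simp [conf, h, SimpleGraph.Walk.support_nil]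

lemma conf_concat {s x y : V} (p : G.Walk s x) (h : G.Adj x y) (hy : y ∉ p.support) :
    conf (p.concat h) =
      Function.update (Function.update (conf p) x Species.C) y Species.A := by
  have hxy : x ≠ y := h.ne
  funext w
  by_cases hw : w = y
  · subst hw
    simp [conf, Function.update]
  · by_cases hwx : w = x
    · subst hwx
      simp [conf, Function.update, hw, hxy, SimpleGraph.Walk.support_concat,
        List.concat_eq_append, SimpleGraph.Walk.end_mem_support]
    · simp [conf, Function.update, hw, hwx, SimpleGraph.Walk.support_concat,
        List.concat_eq_append]

lemma step_concat {s x y : V} (p : G.Walk s x) (h : G.Adj x y) (hy : y ∉ p.support) :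
    Step G rule (conf p) (conf (p.concat h)) := by
  refine ⟨x, y, (Species.A, Species.B, Species.C, Species.A), rfl, h, ?_, ?_, ?_⟩
  · simp [conf]
  · have hyx : y ≠ x := fun hh => hy (hh ▸ p.end_mem_support)
    simp [conf, hyx, hy]
  · exact conf_concat p h hy

lemma reaches_conf {s x : V} (p : G.Walk s x) (hnd : p.support.Nodup) :
    Reaches G rule (fun v => if v = s then Species.A else Species.B) (conf p) := by
  induction p using SimpleGraph.Walk.concatRec with
  | Hnil => rw [conf_nil]; exact Relation.ReflTransGen.refl
  | Hconcat q h ih =>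
    rw [SimpleGraph.Walk.support_concat, List.nodup_append'] at hnd
    obtain ⟨h1, _, h3⟩ := hnd
    have hy : _ ∉ q.support := fun hm => h3 hm (List.mem_singleton_self _)
    exact Relation.ReflTransGen.tail (ih h1) (step_concat q h hy)

lemma invariant {s : V} {J : V → Species}
    (hJ : Reaches G rule (fun v => if v = s then Species.A else Species.B) J) :
    ∃ (x : V) (p : G.Walk s x), p.support.Nodup ∧ J = conf p := by
  induction hJ with
  | refl =>
    exact ⟨s, SimpleGraph.Walk.nil, by simp [SimpleGraph.Walk.support_nil], (conf_nil s).symm⟩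
  | tail hab hbc ih =>
    obtain ⟨x, p, hnd, rfl⟩ := ih
    obtain ⟨u, v, r, hr, hadj, hu, hv, rfl⟩ := hbc
    rw [rule, Set.mem_singleton_iff] at hr
    subst hr
    have hux : u = x := by
      by_contra hne
      simp only [conf, if_neg hne] at hu
      split at hu <;> simp_all
    subst hux
    have hvx : v ≠ u := by
      intro hh; subst hh; simp [conf] at hv
    have hvs : v ∉ p.support := by
      intro hm
      simp [conf, hvx, hm] at hv
    refine ⟨v, p.concat hadj, ?_, (conf_concat p hadj hvs).symm⟩
    rw [SimpleGraph.Walk.support_concat, List.nodup_append']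
    refine ⟨hnd, List.nodup_singleton _, ?_⟩
    intro a ha hb
    rw [List.mem_singleton] at hb
    subst hb
    exact hvs ha

end CRNAux

/-- With species `{A, B, C}` and the single rule `A + B → C + A`, the configuration with
`A` at `t` and `C` elsewhere is reachable from the configuration with `A` at `s` and `B`
elsewhere if and only if `G` has a Hamiltonian path from `s` to `t`. -/
theorem stmt0 {V : Type*} [Fintype V] [DecidableEq V] (G : SimpleGraph V) (s t : V) :
    Reaches G {(Species.A, Species.B, Species.C, Species.A)}
        (fun v => if v = s then Species.A else Species.B)
        (fun v => if v = t then Species.A else Species.C) ↔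
      ∃ p : G.Walk s t, p.IsHamiltonian := by
  constructor
  · intro h
    obtain ⟨x, p, hnd, heq⟩ := CRNAux.invariant h
    have hx : x = t := by
      by_contra hne
      have := congrFun heq x
      simp [CRNAux.conf, if_neg hne] at this
    subst hx
    refine ⟨p, ?_⟩
    have hpath : p.IsPath := (SimpleGraph.Walk.isPath_def p).mpr hnd
    refine hpath.isHamiltonian_of_mem ?_
    intro w
    by_cases hw : w = x
    · exact hw ▸ p.end_mem_support
    · have := congrFun heq w
      simp only [CRNAux.conf, if_neg hw] at this
      by_contra hws
      rw [if_neg hws] at this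
      exact Species.noConfusion this
  · rintro ⟨p, hp⟩
    have hnd : p.support.Nodup := hp.isPath.support_nodup
    have hr := CRNAux.reaches_conf p hnd
    have : CRNAux.conf p = fun v => if v = t then Species.A else Species.C := by
      funext v
      by_cases hv : v = t
      · subst hv; simp [CRNAux.conf]
      · simp [CRNAux.conf, hv, hp.mem_support v]
    rwa [this] at hr
end

section
/- Let G be a finite graph, let the species set be {A, B, C}, and let the only reaction rule be A + B → C + C. Let D = {v : I(v) ≠ T(v)} be the set of cells that change. Then a configuration T is reachable from a configuration I if and only if (1) every cell v ∈ D satisfies I(v) ∈ {A, B} and T(v) = C, and (2) the graph with vertex set D and an edge between u, v ∈ D whenever u and v are adjacent in G and {I(u), I(v)} = {A, B} has a perfect matching. -/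
namespace Stmt3Aux

open Species

variable {V : Type*} [DecidableEq V]

/-- Vertex-disjointness of two pairs. -/
def Dist (p q : V × V) : Prop := p.1 ≠ q.1 ∧ p.1 ≠ q.2 ∧ p.2 ≠ q.1 ∧ p.2 ≠ q.2

lemma dist_symm : Symmetric (Dist (V := V)) := by
  rintro p q ⟨h1, h2, h3, h4⟩
  exact ⟨h1.symm, h3.symm, h2.symm, h4.symm⟩

/-- `L` is a list of vertex-disjoint adjacent `A`-`B` pairs whose simultaneous firing turns
`I` into `T`. -/
def Ok (G : SimpleGraph V) (I T : V → Species) (L : List (V × V)) : Prop :=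
  (∀ p ∈ L, G.Adj p.1 p.2 ∧ I p.1 = Species.A ∧ I p.2 = Species.B) ∧
  List.Pairwise Dist L ∧
  (∀ w, (∃ p ∈ L, w = p.1 ∨ w = p.2) → T w = Species.C) ∧
  (∀ w, (¬ ∃ p ∈ L, w = p.1 ∨ w = p.2) → T w = I w)

lemma reaches_to_ok (G : SimpleGraph V) (T : V → Species) :
    ∀ I : V → Species, Reaches G {(Species.A, Species.B, Species.C, Species.C)} I T →
      ∃ L, Ok G I T L := by
  intro I h
  induction h using Relation.ReflTransGen.head_induction_on with
  | refl =>
    refine ⟨[], ?_, ?_, ?_, ?_⟩ <;> simp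
  | head hstep _ ih =>
    rename_i I J _
    obtain ⟨L, hP, hPW, hC, hE⟩ := ih
    obtain ⟨u, v, r, hr, hadj, hIu, hIv, hJ⟩ := hstep
    rw [Set.mem_singleton_iff] at hr
    subst hr
    simp only at hIu hIv
    have huv : u ≠ v := hadj.ne
    have hJu : J u = Species.C := by
      simp [hJ, Function.update_apply, huv]
    have hJv : J v = Species.C := by
      simp [hJ, Function.update_apply]
    have hJw : ∀ w, w ≠ u → w ≠ v → J w = I w := by
      intro w h1 h2
      simp [hJ, Function.update_apply, h1, h2]
    have hx1 : ∀ p ∈ L, p.1 ≠ u ∧ p.1 ≠ v ∧ p.2 ≠ u ∧ p.2 ≠ v := by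
      intro p hp
      obtain ⟨-, h1, h2⟩ := hP p hp
      refine ⟨fun h => ?_, fun h => ?_, fun h => ?_, fun h => ?_⟩
      · rw [h, hJu] at h1; exact Species.noConfusion h1
      · rw [h, hJv] at h1; exact Species.noConfusion h1
      · rw [h, hJu] at h2; exact Species.noConfusion h2
      · rw [h, hJv] at h2; exact Species.noConfusion h2
    refine ⟨(u, v) :: L, ?_, ?_, ?_, ?_⟩
    · intro p hp
      rcases List.mem_cons.mp hp with rfl | hp
      · exact ⟨hadj, hIu, hIv⟩
      · obtain ⟨ha, h1, h2⟩ := hP p hp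
        obtain ⟨e1, e2, e3, e4⟩ := hx1 p hp
        exact ⟨ha, (hJw p.1 e1 e2) ▸ h1, (hJw p.2 e3 e4) ▸ h2⟩
    · refine List.Pairwise.cons ?_ hPW
      intro p hp
      obtain ⟨e1, e2, e3, e4⟩ := hx1 p hp
      exact ⟨e1.symm, e3.symm, e2.symm, e4.symm⟩
    · rintro w ⟨p, hp, hw⟩
      rcases List.mem_cons.mp hp with rfl | hp
      · have hwn : ¬ ∃ q ∈ L, w = q.1 ∨ w = q.2 := by
          rintro ⟨q, hq, hwq⟩
          obtain ⟨e1, e2, e3, e4⟩ := hx1 q hq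
          rcases hw with rfl | rfl <;> rcases hwq with rfl | rfl <;>
            simp only [ne_eq, not_true_eq_false] at e1 e2 e3 e4
        rcases hw with rfl | rfl
        · exact (hE _ hwn).trans hJu
        · exact (hE _ hwn).trans hJv
      · exact hC w ⟨p, hp, hw⟩
    · intro w hw
      have h1 : w ≠ u := fun h => hw ⟨(u, v), List.mem_cons_self, Or.inl h⟩
      have h2 : w ≠ v := fun h => hw ⟨(u, v), List.mem_cons_self, Or.inr h⟩
      have : ¬ ∃ p ∈ L, w = p.1 ∨ w = p.2 := fun ⟨p, hp, hwp⟩ =>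
        hw ⟨p, List.mem_cons_of_mem _ hp, hwp⟩
      exact (hE w this).trans (hJw w h1 h2)

lemma ok_to_reaches (G : SimpleGraph V) (T : V → Species) :
    ∀ (L : List (V × V)) (I : V → Species), Ok G I T L →
      Reaches G {(Species.A, Species.B, Species.C, Species.C)} I T := by
  intro L
  induction L with
  | nil =>
    intro I ⟨hP, hPW, hC, hE⟩
    have : T = I := funext fun w => hE w (by simp)
    rw [this]
    exact Relation.ReflTransGen.refl
  | cons p L ih =>
    intro I ⟨hP, hPW, hC, hE⟩
    obtain ⟨hadj, hA, hB⟩ := hP p (List.mem_cons_self)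
    have huv : p.1 ≠ p.2 := hadj.ne
    set J : V → Species :=
      Function.update (Function.update I p.1 Species.C) p.2 Species.C with hJdef
    have hstep : Step G {(Species.A, Species.B, Species.C, Species.C)} I J :=
      ⟨p.1, p.2, (Species.A, Species.B, Species.C, Species.C), rfl, hadj, hA, hB, rfl⟩
    have hJ1 : J p.1 = Species.C := by simp [hJdef, Function.update_apply, huv]
    have hJ2 : J p.2 = Species.C := by simp [hJdef, Function.update_apply]
    have hJw : ∀ w, w ≠ p.1 → w ≠ p.2 → J w = I w := by
      intro w h1 h2
      simp [hJdef, Function.update_apply, h1, h2]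
    obtain ⟨hhd, hPW'⟩ := List.pairwise_cons.mp hPW
    refine Relation.ReflTransGen.head hstep (ih J ⟨?_, hPW', ?_, ?_⟩)
    · intro q hq
      obtain ⟨ha, h1, h2⟩ := hP q (List.mem_cons_of_mem _ hq)
      obtain ⟨e1, e2, e3, e4⟩ := hhd q hq
      exact ⟨ha, (hJw q.1 (Ne.symm e1) (Ne.symm e3)) ▸ h1,
        (hJw q.2 (Ne.symm e2) (Ne.symm e4)) ▸ h2⟩
    · rintro w ⟨q, hq, hwq⟩
      exact hC w ⟨q, List.mem_cons_of_mem _ hq, hwq⟩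
    · intro w hw
      by_cases h1 : w = p.1
      · subst h1
        exact (hC _ ⟨p, List.mem_cons_self, Or.inl rfl⟩).trans hJ1.symm
      by_cases h2 : w = p.2
      · subst h2
        exact (hC _ ⟨p, List.mem_cons_self, Or.inr rfl⟩).trans hJ2.symm
      have : ¬ ∃ q ∈ p :: L, w = q.1 ∨ w = q.2 := by
        rintro ⟨q, hq, hwq⟩
        rcases List.mem_cons.mp hq with rfl | hq
        · rcases hwq with rfl | rfl
          · exact h1 rfl
          · exact h2 rfl
        · exact hw ⟨q, hq, hwq⟩
      exact (hE w this).trans (hJw w h1 h2).symm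

lemma ok_to_rhs (G : SimpleGraph V) (I T : V → Species) (L : List (V × V))
    (hOk : Ok G I T L) :
    (∀ v ∈ {v | I v ≠ T v}, (I v = Species.A ∨ I v = Species.B) ∧ T v = Species.C) ∧
      ∃ M : (SimpleGraph.fromRel
          (fun u v : {v | I v ≠ T v} => G.Adj u v ∧
            ((I u = Species.A ∧ I v = Species.B) ∨
             (I u = Species.B ∧ I v = Species.A)))).Subgraph,
        M.IsPerfectMatching := by
  obtain ⟨hP, hPW, hC, hE⟩ := hOk
  have hmem : ∀ w, I w ≠ T w → ∃ p ∈ L, w = p.1 ∨ w = p.2 := by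
    intro w hw
    by_contra h
    exact hw (hE w h).symm
  have hmem' : ∀ p ∈ L, ∀ w, (w = p.1 ∨ w = p.2) → I w ≠ T w := by
    rintro p hp w hw
    have hTw : T w = Species.C := hC w ⟨p, hp, hw⟩
    obtain ⟨-, h1, h2⟩ := hP p hp
    rcases hw with rfl | rfl
    · rw [h1, hTw]; exact Species.noConfusion
    · rw [h2, hTw]; exact Species.noConfusion
  have key : ∀ p ∈ L, ∀ q ∈ L, ∀ w, (w = p.1 ∨ w = p.2) → (w = q.1 ∨ w = q.2) → p = q := by
    intro p hp q hq w hwp hwq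
    by_contra hne
    obtain ⟨e1, e2, e3, e4⟩ := (haveI : Std.Symm (Dist (V := V)) := ⟨dist_symm⟩; hPW.forall hp hq hne)
    rcases hwp with rfl | rfl <;> rcases hwq with h | h <;>
      first | exact e1 h | exact e2 h | exact e3 h | exact e4 h
  have cond1 : ∀ v ∈ {v | I v ≠ T v},
      (I v = Species.A ∨ I v = Species.B) ∧ T v = Species.C := by
    intro v hv
    obtain ⟨p, hp, hvp⟩ := hmem v hv
    obtain ⟨-, h1, h2⟩ := hP p hp
    refine ⟨?_, hC v ⟨p, hp, hvp⟩⟩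
    rcases hvp with rfl | rfl
    · exact Or.inl h1
    · exact Or.inr h2
  refine ⟨cond1, ⟨Set.univ,
      fun x y => ((x : V), (y : V)) ∈ L ∨ ((y : V), (x : V)) ∈ L,
      ?_, fun {_ _} _ => Set.mem_univ _, ⟨fun x y h => Or.symm h⟩⟩, ?_, fun v => Set.mem_univ v⟩
  · intro x y h
    rw [SimpleGraph.fromRel_adj]
    rcases h with h | h
    · obtain ⟨ha, h1, h2⟩ := hP _ h
      exact ⟨fun he => ha.ne (congrArg Subtype.val he), Or.inl ⟨ha, Or.inl ⟨h1, h2⟩⟩⟩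
    · obtain ⟨ha, h1, h2⟩ := hP _ h
      exact ⟨fun he => ha.ne (congrArg Subtype.val he).symm, Or.inl ⟨ha.symm, Or.inr ⟨h2, h1⟩⟩⟩
  · intro x _
    obtain ⟨p, hp, hxp⟩ := hmem (x : V) x.2
    have hpne : (p.1 : V) ≠ p.2 := (hP p hp).1.ne
    rcases hxp with hxp | hxp
    · have hp2 : I p.2 ≠ T p.2 := hmem' p hp p.2 (Or.inr rfl)
      refine ⟨⟨p.2, hp2⟩, Or.inl ?_, ?_⟩
      · show ((x : V), p.2) ∈ L
        rw [hxp]; simpa using hp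
      · rintro y (hy | hy)
        · have h := key _ hy _ hp (x : V) (Or.inl rfl) (Or.inl hxp)
          exact Subtype.ext (congrArg Prod.snd h)
        · have h := key _ hy _ hp (x : V) (Or.inr rfl) (Or.inl hxp)
          exact (hpne (hxp.symm.trans (congrArg Prod.snd h))).elim
    · have hp1 : I p.1 ≠ T p.1 := hmem' p hp p.1 (Or.inl rfl)
      refine ⟨⟨p.1, hp1⟩, Or.inr ?_, ?_⟩
      · show ((p.1 : V), (x : V)) ∈ L
        rw [hxp]; simpa using hp
      · rintro y (hy | hy)
        · have h := key _ hy _ hp (x : V) (Or.inl rfl) (Or.inr hxp)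
          exact (hpne ((congrArg Prod.fst h).symm.trans hxp)).elim
        · have h := key _ hy _ hp (x : V) (Or.inr rfl) (Or.inr hxp)
          exact Subtype.ext (congrArg Prod.fst h)

lemma rhs_to_ok [Fintype V] (G : SimpleGraph V) (I T : V → Species)
    (cond1 : ∀ v ∈ {v | I v ≠ T v},
      (I v = Species.A ∨ I v = Species.B) ∧ T v = Species.C)
    (M : (SimpleGraph.fromRel
          (fun u v : {v | I v ≠ T v} => G.Adj u v ∧
            ((I u = Species.A ∧ I v = Species.B) ∨
             (I u = Species.B ∧ I v = Species.A)))).Subgraph)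
    (hM : M.IsPerfectMatching) : ∃ L, Ok G I T L := by
  classical
  have ex : ∀ x : ↥{v | I v ≠ T v}, ∃! y, M.Adj x y := fun x => hM.1 (hM.2 x)
  let f : ↥{v | I v ≠ T v} → ↥{v | I v ≠ T v} := fun x => (ex x).choose
  have hfadj : ∀ x, M.Adj x (f x) := fun x => (ex x).choose_spec.1
  have huniq : ∀ x y, M.Adj x y → y = f x := fun x y h => (ex x).choose_spec.2 y h
  have hrel : ∀ x y : ↥{v | I v ≠ T v}, M.Adj x y → G.Adj ↑x ↑y ∧
      ((I ↑x = Species.A ∧ I ↑y = Species.B) ∨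
       (I ↑x = Species.B ∧ I ↑y = Species.A)) := by
    intro x y h
    have h' := M.adj_sub h
    rw [SimpleGraph.fromRel_adj] at h'
    obtain ⟨-, h1 | h1⟩ := h'
    · exact h1
    · exact ⟨h1.1.symm, h1.2.elim (fun h => Or.inr ⟨h.2, h.1⟩) (fun h => Or.inl ⟨h.2, h.1⟩)⟩
  have hff : ∀ x, f (f x) = x := fun x => (huniq (f x) x (M.adj_symm (hfadj x))).symm
  have hfB : ∀ x : ↥{v | I v ≠ T v}, I ↑x = Species.A → I ↑(f x) = Species.B := by
    intro x hx
    rcases (hrel x (f x) (hfadj x)).2 with h | h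
    · exact h.2
    · rw [hx] at h; exact Species.noConfusion h.1
  have hfA : ∀ x : ↥{v | I v ≠ T v}, I ↑x = Species.B → I ↑(f x) = Species.A := by
    intro x hx
    rcases (hrel x (f x) (hfadj x)).2 with h | h
    · rw [hx] at h; exact Species.noConfusion h.1
    · exact h.2
  set s : Finset ↥{v | I v ≠ T v} :=
    Finset.univ.filter (fun x => I ↑x = Species.A) with hs
  have hmems : ∀ x : ↥{v | I v ≠ T v}, x ∈ s ↔ I ↑x = Species.A := by
    intro x; simp [hs]
  refine ⟨s.toList.map (fun x : ↥{v | I v ≠ T v} => ((x : V), (f x : V))), ?_, ?_, ?_, ?_⟩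
  · intro p hp
    obtain ⟨x, hx, rfl⟩ := List.mem_map.mp hp
    have hxA : I ↑x = Species.A := (hmems x).mp (Finset.mem_toList.mp hx)
    exact ⟨(hrel x (f x) (hfadj x)).1, hxA, hfB x hxA⟩
  · rw [List.pairwise_map]
    refine List.Pairwise.imp_of_mem ?_ s.nodup_toList
    intro x y hx hy hne
    have hxA : I ↑x = Species.A := (hmems x).mp (Finset.mem_toList.mp hx)
    have hyA : I ↑y = Species.A := (hmems y).mp (Finset.mem_toList.mp hy)
    refine ⟨fun h => hne (Subtype.ext h), fun h => ?_, fun h => ?_, fun h => ?_⟩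
    · have h' : (x : V) = ↑(f y) := h
      have hb := hfB y hyA
      rw [← h', hxA] at hb; exact Species.noConfusion hb
    · have h' : (f x : V) = ↑y := h
      have hb := hfB x hxA
      rw [h', hyA] at hb; exact Species.noConfusion hb
    · have h' : (f x : V) = ↑(f y) := h
      have hfe : f x = f y := Subtype.ext h'
      have h1 : x = f (f x) := huniq (f x) x (M.adj_symm (hfadj x))
      have h2 : y = f (f x) := huniq (f x) y (by rw [hfe]; exact M.adj_symm (hfadj y))
      exact hne (h1.trans h2.symm)
  · rintro w ⟨p, hp, hwp⟩
    obtain ⟨x, hx, rfl⟩ := List.mem_map.mp hp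
    rcases hwp with rfl | rfl
    · exact (cond1 _ x.2).2
    · exact (cond1 _ (f x).2).2
  · intro w hw
    by_contra hTw
    have hwD : I w ≠ T w := Ne.symm hTw
    rcases (cond1 w hwD).1 with hA | hB
    · refine hw ⟨(((⟨w, hwD⟩ : ↥{v | I v ≠ T v}) : V), (f ⟨w, hwD⟩ : V)),
        List.mem_map.mpr ⟨⟨w, hwD⟩, Finset.mem_toList.mpr ((hmems _).mpr hA), rfl⟩,
        Or.inl rfl⟩
    · have hfxA : I ↑(f ⟨w, hwD⟩) = Species.A := hfA _ hB
      refine hw ⟨((f ⟨w, hwD⟩ : V), (f (f ⟨w, hwD⟩) : V)),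
        List.mem_map.mpr ⟨f ⟨w, hwD⟩, Finset.mem_toList.mpr ((hmems _).mpr hfxA), rfl⟩,
        Or.inr ?_⟩
      rw [hff]

end Stmt3Aux

/-- With species `{A, B, C}` and the single rule `A + B → C + C`, `T` is reachable from `I`
iff every changed cell goes from `A` or `B` to `C`, and the graph on changed cells with
an edge between adjacent cells holding `{A, B}` in `I` has a perfect matching. -/
theorem stmt3 {V : Type*} [Fintype V] [DecidableEq V] (G : SimpleGraph V)
    (I T : V → Species) :
    Reaches G {(Species.A, Species.B, Species.C, Species.C)} I T ↔
      (∀ v ∈ {v | I v ≠ T v}, (I v = Species.A ∨ I v = Species.B) ∧ T v = Species.C) ∧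
      ∃ M : (SimpleGraph.fromRel
          (fun u v : {v | I v ≠ T v} => G.Adj u v ∧
            ((I u = Species.A ∧ I v = Species.B) ∨
             (I u = Species.B ∧ I v = Species.A)))).Subgraph,
        M.IsPerfectMatching := by
  constructor
  · intro h
    obtain ⟨L, hOk⟩ := Stmt3Aux.reaches_to_ok G T I h
    exact Stmt3Aux.ok_to_rhs G I T L hOk
  · rintro ⟨h1, M, hM⟩
    obtain ⟨L, hOk⟩ := Stmt3Aux.rhs_to_ok G I T h1 M hM
    exact Stmt3Aux.ok_to_reaches G T L I hOk
end

section
/- Let G be a finite graph, let S be any finite species set containing two distinct species A and B, and let the only reaction rule be the swap reaction A + B → B + A. Then a configuration T is reachable from a configuration I if and only if (1) every cell v with I(v) ∉ {A, B} satisfies T(v) = I(v), (2) for every cell v, I(v) ∈ {A, B} if and only if T(v) ∈ {A, B}, and (3) for every connected component K of the induced subgraph of G on {v : I(v) ∈ {A, B}}, the number of cells v ∈ K with I(v) = A equals the number of cells v ∈ K with T(v) = A. -/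
section Aux

variable {V S : Type*} [Fintype V] [DecidableEq V] [Fintype S] [DecidableEq S]

lemma crn_update_val {P : Set V} (J : V → S) (u v : ↥P) (a b : S) (x : ↥P) :
    Function.update (Function.update J ↑u b) ↑v a ↑x
      = if x = v then a else if x = u then b else J ↑x := by
  by_cases h1 : x = v
  · subst h1; simp
  · have h1' : (x : V) ≠ ↑v := fun hh => h1 (Subtype.ext hh)
    by_cases h2 : x = u
    · subst h2; simp [Function.update_apply, h1', h1]
    · have h2' : (x : V) ≠ ↑u := fun hh => h2 (Subtype.ext hh)
      simp [Function.update_apply, h1', h2', h1, h2]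

lemma crn_ncard_swap {A B : S} (hAB : A ≠ B) {G : SimpleGraph V} {P : Set V} (J : V → S)
    (u v : ↥P) (huv : u ≠ v)
    (hc : (G.induce P).connectedComponentMk u = (G.induce P).connectedComponentMk v)
    (hJu : J ↑u = A) (hJv : J ↑v ≠ A) (K : (G.induce P).ConnectedComponent) :
    {x | x ∈ K.supp ∧ (Function.update (Function.update J ↑u B) ↑v A) ↑x = A}.ncard
      = {x | x ∈ K.supp ∧ J ↑x = A}.ncard := by
  by_cases hK : K = (G.induce P).connectedComponentMk u
  · have hus : u ∈ K.supp := by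
      rw [SimpleGraph.ConnectedComponent.mem_supp_iff, hK]
    have hvs : v ∈ K.supp := by
      rw [SimpleGraph.ConnectedComponent.mem_supp_iff, hK]; exact hc.symm
    have hset : {x | x ∈ K.supp ∧ (Function.update (Function.update J ↑u B) ↑v A) ↑x = A}
        = insert v ({x : ↥P | x ∈ K.supp ∧ J ↑x = A} \ {u}) := by
      ext x
      simp only [Set.mem_setOf_eq, crn_update_val, Set.mem_insert_iff, Set.mem_diff,
        Set.mem_singleton_iff]
      by_cases h1 : x = v
      · subst h1; simp [hvs]
      · by_cases h2 : x = u
        · subst h2; simp [h1, huv, hAB.symm]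
        · simp [h1, h2]
    rw [hset, Set.ncard_insert_of_notMem (by rintro ⟨⟨_, hv'⟩, _⟩; exact hJv hv')]
    exact Set.ncard_diff_singleton_add_one ⟨hus, hJu⟩
  · have hu : u ∉ K.supp := fun h =>
      hK ((SimpleGraph.ConnectedComponent.mem_supp_iff K u).1 h).symm
    have hv : v ∉ K.supp := fun h =>
      hK ((((SimpleGraph.ConnectedComponent.mem_supp_iff K v).1 h).symm).trans hc.symm)
    congr 1
    ext x
    by_cases hx : x ∈ K.supp
    · have h1 : x ≠ v := fun e => hv (e ▸ hx)
      have h2 : x ≠ u := fun e => hu (e ▸ hx)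
      simp [Set.mem_setOf_eq, crn_update_val, hx, h1, h2]
    · simp only [Set.mem_setOf_eq]
      exact iff_of_false (fun h => hx h.1) (fun h => hx h.1)

lemma crn_route {A B : S} (hAB : A ≠ B) (G : SimpleGraph V) (P : Set V) :
    ∀ {u v : ↥P} (_ : (G.induce P).Walk u v) (J : V → S),
      (∀ x, x ∈ P → J x ∈ ({A, B} : Set S)) → J ↑u = A → J ↑v = B →
      Reaches G {(A, B, B, A)} J (Function.update (Function.update J ↑u B) ↑v A) := by
  intro u v w
  induction w with
  | nil =>
    intro J _ hA hB
    exact absurd (hA.symm.trans hB) hAB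
  | @cons a b c h w ih =>
    intro J hall hA hB
    have hadj : G.Adj ↑a ↑b := h
    have hab : (a : V) ≠ ↑b := hadj.ne
    have hac : (a : V) ≠ ↑c := fun e => hAB (hA.symm.trans (by rw [e]; exact hB))
    have hy := hall ↑b b.2
    simp only [Set.mem_insert_iff, Set.mem_singleton_iff] at hy
    rcases hy with hy | hy
    · -- J b = A : first move the A from b to c, then swap a and b
      have hbc : b ≠ c := fun e => hAB ((show J ↑c = A by rw [← e]; exact hy).symm.trans hB)
      have hbc' : (b : V) ≠ ↑c := fun e => hbc (Subtype.ext e)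
      have hR := ih J hall hy hB
      set J₂ := Function.update (Function.update J ↑b B) ↑c A with hJ₂
      have h2a : J₂ ↑a = A := by
        simp [hJ₂, Function.update_apply, hac, hab, hA]
      have h2b : J₂ ↑b = B := by
        simp [hJ₂, Function.update_apply, hbc']
      have hstep : Step G {(A, B, B, A)} J₂
          (Function.update (Function.update J₂ ↑a B) ↑b A) :=
        ⟨↑a, ↑b, (A, B, B, A), rfl, hadj, h2a, h2b, rfl⟩
      have hfinal : Function.update (Function.update J₂ ↑a B) ↑b A
          = Function.update (Function.update J ↑a B) ↑c A := by
        funext x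
        by_cases e1 : x = ↑b
        · simp [e1, hJ₂, Function.update_apply, Ne.symm hab, hbc', hy]
        · by_cases e2 : x = ↑a
          · simp [e2, hJ₂, Function.update_apply, hab, hac]
          · by_cases e3 : x = ↑c
            · simp [e3, e1, e2, hJ₂, Function.update_apply, Ne.symm hbc', Ne.symm hac]
            · simp [e1, e2, e3, hJ₂, Function.update_apply]
      exact Relation.ReflTransGen.tail hR (hfinal ▸ hstep)
    · -- J b = B : swap a and b first, then move the A from b to c
      by_cases hbc : b = c
      · subst hbc
        exact Relation.ReflTransGen.single ⟨↑a, ↑b, (A, B, B, A), rfl, hadj, hA, hy, rfl⟩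
      · have hbc' : (b : V) ≠ ↑c := fun e => hbc (Subtype.ext e)
        set J₁ := Function.update (Function.update J ↑a B) ↑b A with hJ₁
        have hstep : Step G {(A, B, B, A)} J J₁ :=
          ⟨↑a, ↑b, (A, B, B, A), rfl, hadj, hA, hy, rfl⟩
        have h1all : ∀ x, x ∈ P → J₁ x ∈ ({A, B} : Set S) := by
          intro x hx
          by_cases e1 : x = ↑b
          · subst e1; simp [hJ₁]
          · by_cases e2 : x = ↑a
            · subst e2; simp [hJ₁, Function.update_apply, hab]
            · simp only [hJ₁, Function.update_apply, if_neg e1, if_neg e2]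
              exact hall x hx
        have h1b : J₁ ↑b = A := by simp [hJ₁]
        have h1c : J₁ ↑c = B := by
          simp [hJ₁, Function.update_apply, Ne.symm hbc', Ne.symm hac, hB]
        have hR := ih J₁ h1all h1b h1c
        have hfinal : Function.update (Function.update J₁ ↑b B) ↑c A
            = Function.update (Function.update J ↑a B) ↑c A := by
          funext x
          by_cases e1 : x = ↑c
          · subst e1; simp
          · by_cases e2 : x = ↑b
            · simp [e2, e1, hJ₁, Function.update_apply, Ne.symm hab, hbc', hy]
            · by_cases e3 : x = ↑a
              · simp [e3, e1, e2, hJ₁, Function.update_apply, hab, hac]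
              · simp [e1, e2, e3, hJ₁, Function.update_apply]
        exact Relation.ReflTransGen.head hstep (hfinal ▸ hR)

lemma crn_back {A B : S} (hAB : A ≠ B) (G : SimpleGraph V) (P : Set V) (T : V → S)
    (hT : ∀ x, T x ∈ ({A, B} : Set S) ↔ x ∈ P) :
    ∀ (n : ℕ) (J : V → S),
      (Finset.univ.filter fun x => J x ≠ T x).card ≤ n →
      (∀ x, x ∉ P → J x = T x) →
      (∀ x, J x ∈ ({A, B} : Set S) ↔ x ∈ P) →
      (∀ K : (G.induce P).ConnectedComponent,
        {x | x ∈ K.supp ∧ J ↑x = A}.ncard = {x | x ∈ K.supp ∧ T ↑x = A}.ncard) →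
      Reaches G {(A, B, B, A)} J T := by
  intro n
  induction n with
  | zero =>
    intro J hcard _ _ _
    have hJT : J = T := by
      funext x
      by_contra hx
      have : x ∈ Finset.univ.filter fun x => J x ≠ T x := by simp [hx]
      have := Finset.card_pos.2 ⟨x, this⟩
      omega
    exact hJT ▸ Relation.ReflTransGen.refl
  | succ n ih =>
    intro J hcard h1 h2 h3
    by_cases hJT : J = T
    · exact hJT ▸ Relation.ReflTransGen.refl
    obtain ⟨v₀, hv₀⟩ : ∃ x, J x ≠ T x := by
      by_contra h; push_neg at h; exact hJT (funext h)
    have hv₀P : v₀ ∈ P := by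
      by_contra h; exact hv₀ (h1 v₀ h)
    set v₀' : ↥P := ⟨v₀, hv₀P⟩ with hv₀'
    set K := (G.induce P).connectedComponentMk v₀' with hKdef
    have hv₀K : v₀' ∈ K.supp := (SimpleGraph.ConnectedComponent.mem_supp_iff K v₀').2 rfl
    have hmemval : ∀ x : ↥P, J ↑x = A ∨ J ↑x = B := fun x => by
      have := (h2 ↑x).2 x.2
      simpa using this
    have hmemvalT : ∀ x : ↥P, T ↑x = A ∨ T ↑x = B := fun x => by
      have := (hT ↑x).2 x.2
      simpa using this
    have hvex : ∃ x : ↥P, x ∈ K.supp ∧ J ↑x = B ∧ T ↑x = A := by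
      by_contra hno
      push_neg at hno
      have hsub : {x : ↥P | x ∈ K.supp ∧ T ↑x = A} ⊆ {x | x ∈ K.supp ∧ J ↑x = A} := by
        rintro x ⟨hx, hTx⟩
        refine ⟨hx, ?_⟩
        rcases hmemval x with h | h
        · exact h
        · exact absurd hTx (hno x hx h)
      rcases hmemval v₀' with hJ0 | hJ0
      · have hT0 : T v₀ ≠ A := fun hTA => hv₀ (hJ0.trans hTA.symm)
        have hssub : {x : ↥P | x ∈ K.supp ∧ T ↑x = A} ⊂ {x | x ∈ K.supp ∧ J ↑x = A} :=
          ⟨hsub, fun hsup => hT0 (hsup ⟨hv₀K, hJ0⟩).2⟩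
        have hlt := Set.ncard_lt_ncard hssub
        have := h3 K
        omega
      · have hT0 : T v₀ = A := by
          rcases hmemvalT v₀' with h | h
          · exact h
          · exact absurd (hJ0.trans h.symm) hv₀
        exact hno v₀' hv₀K hJ0 hT0
    obtain ⟨v, hvK, hJv, hTv⟩ := hvex
    have huex : ∃ x : ↥P, x ∈ K.supp ∧ J ↑x = A ∧ T ↑x = B := by
      by_contra hno
      push_neg at hno
      have hsub : {x : ↥P | x ∈ K.supp ∧ J ↑x = A} ⊆ {x | x ∈ K.supp ∧ T ↑x = A} := by
        rintro x ⟨hx, hJx⟩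
        refine ⟨hx, ?_⟩
        rcases hmemvalT x with h | h
        · exact h
        · exact absurd h (hno x hx hJx)
      have hssub : {x : ↥P | x ∈ K.supp ∧ J ↑x = A} ⊂ {x | x ∈ K.supp ∧ T ↑x = A} :=
        ⟨hsub, fun hsup => hAB (((hsup ⟨hvK, hTv⟩).2).symm.trans hJv)⟩
      have hlt := Set.ncard_lt_ncard hssub
      have := h3 K
      omega
    obtain ⟨u, huK, hJu, hTu⟩ := huex
    have huv : u ≠ v := fun e => hAB (by rw [← hJu, e]; exact hJv)
    have hreach : (G.induce P).Reachable u v :=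
      SimpleGraph.ConnectedComponent.exact
        (((SimpleGraph.ConnectedComponent.mem_supp_iff K u).1 huK).trans
          ((SimpleGraph.ConnectedComponent.mem_supp_iff K v).1 hvK).symm)
    obtain ⟨w⟩ := hreach
    have hR1 := crn_route hAB G P w J (fun x hx => (h2 x).2 hx) hJu hJv
    set J' := Function.update (Function.update J ↑u B) ↑v A with hJ'
    have huv' : (u : V) ≠ ↑v := fun e => huv (Subtype.ext e)
    have h1' : ∀ x, x ∉ P → J' x = T x := by
      intro x hx
      have hxu : x ≠ ↑u := fun e => hx (e ▸ u.2)
      have hxv : x ≠ ↑v := fun e => hx (e ▸ v.2)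
      simp only [hJ', Function.update_apply, if_neg hxu, if_neg hxv]
      exact h1 x hx
    have h2' : ∀ x, J' x ∈ ({A, B} : Set S) ↔ x ∈ P := by
      intro x
      by_cases e1 : x = ↑v
      · subst e1; simp [hJ', v.2]
      · by_cases e2 : x = ↑u
        · subst e2; simp [hJ', Function.update_apply, e1, u.2]
        · simp only [hJ', Function.update_apply, if_neg e1, if_neg e2]
          exact h2 x
    have hcompuv : (G.induce P).connectedComponentMk u = (G.induce P).connectedComponentMk v :=
      (((SimpleGraph.ConnectedComponent.mem_supp_iff K u).1 huK).trans
        ((SimpleGraph.ConnectedComponent.mem_supp_iff K v).1 hvK).symm)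
    have h3' : ∀ K' : (G.induce P).ConnectedComponent,
        {x | x ∈ K'.supp ∧ J' ↑x = A}.ncard = {x | x ∈ K'.supp ∧ T ↑x = A}.ncard := by
      intro K'
      have := crn_ncard_swap hAB J u v huv hcompuv hJu (by rw [hJv]; exact Ne.symm hAB) K'
      rw [hJ']
      exact this.trans (h3 K')
    have hcard' : (Finset.univ.filter fun x => J' x ≠ T x).card ≤ n := by
      have hsub : (Finset.univ.filter fun x => J' x ≠ T x)
          ⊆ (Finset.univ.filter fun x => J x ≠ T x).erase ↑u := by
        intro x hx
        simp only [Finset.mem_filter, Finset.mem_erase, Finset.mem_univ, true_and] at hx ⊢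
        by_cases e1 : x = ↑v
        · exact absurd (by rw [e1]; simp [hJ', hTv]) hx
        · by_cases e2 : x = ↑u
          · exact absurd (by rw [e2]; simp [hJ', Function.update_apply, huv', hTu]) hx
          · refine ⟨e2, ?_⟩
            rwa [show J' x = J x by simp [hJ', Function.update_apply, e1, e2]] at hx
      have humem : (u : V) ∈ Finset.univ.filter fun x => J x ≠ T x := by
        simp only [Finset.mem_filter, Finset.mem_univ, true_and, hJu, hTu]
        exact hAB
      have h11 := Finset.card_le_card hsub
      have h12 := Finset.card_erase_of_mem humem
      have h13 := Finset.card_pos.2 ⟨(u : V), humem⟩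
      omega
    exact hR1.trans (ih J' hcard' h1' h2' h3')

lemma crn_fwd_step {A B : S} (hAB : A ≠ B) (G : SimpleGraph V) (I J T : V → S)
    (c1 : ∀ v, I v ∉ ({A, B} : Set S) → J v = I v)
    (c2 : ∀ v, I v ∈ ({A, B} : Set S) ↔ J v ∈ ({A, B} : Set S))
    (c3 : ∀ K : (G.induce {v | I v ∈ ({A, B} : Set S)}).ConnectedComponent,
        {v | v ∈ K.supp ∧ I v.val = A}.ncard = {v | v ∈ K.supp ∧ J v.val = A}.ncard)
    (h : Step G {(A, B, B, A)} J T) :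
    (∀ v, I v ∉ ({A, B} : Set S) → T v = I v) ∧
    (∀ v, I v ∈ ({A, B} : Set S) ↔ T v ∈ ({A, B} : Set S)) ∧
    (∀ K : (G.induce {v | I v ∈ ({A, B} : Set S)}).ConnectedComponent,
        {v | v ∈ K.supp ∧ I v.val = A}.ncard = {v | v ∈ K.supp ∧ T v.val = A}.ncard) := by
  obtain ⟨u, v, r, hr, hadj, hJu, hJv, hTdef⟩ := h
  rw [Set.mem_singleton_iff] at hr
  subst hr
  subst hTdef
  set P : Set V := {v | I v ∈ ({A, B} : Set S)} with hP
  have huP : u ∈ P := (c2 u).2 (by rw [hJu]; exact Set.mem_insert _ _)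
  have hvP : v ∈ P := (c2 v).2 (by rw [hJv]; exact Set.mem_insert_iff.2 (Or.inr rfl))
  set uP : ↥P := ⟨u, huP⟩
  set vP : ↥P := ⟨v, hvP⟩
  have hadj' : (G.induce P).Adj uP vP := hadj
  have hcomp : (G.induce P).connectedComponentMk uP = (G.induce P).connectedComponentMk vP :=
    SimpleGraph.ConnectedComponent.sound hadj'.reachable
  have huvne : uP ≠ vP := fun e => hadj.ne (congrArg Subtype.val e)
  refine ⟨?_, ?_, ?_⟩
  · intro x hx
    have hxu : x ≠ u := fun e => hx (e ▸ huP)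
    have hxv : x ≠ v := fun e => hx (e ▸ hvP)
    simp only [Function.update_apply, if_neg hxu, if_neg hxv]
    exact c1 x hx
  · intro x
    by_cases e1 : x = v
    · subst e1
      simp only [Function.update_self]
      constructor
      · intro _; exact Set.mem_insert _ _
      · intro _; exact hvP
    · by_cases e2 : x = u
      · subst e2
        simp only [Function.update_apply, if_neg e1, Function.update_self]
        constructor
        · intro _; exact Set.mem_insert_iff.2 (Or.inr rfl)
        · intro _; exact huP
      · simp only [Function.update_apply, if_neg e1, if_neg e2]
        exact c2 x
  · intro K
    have := crn_ncard_swap hAB J uP vP huvne hcomp hJu (by rw [hJv]; exact Ne.symm hAB) K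
    exact (c3 K).trans this.symm

end Aux

/-- With an arbitrary finite species set `S` containing distinct species `A` and `B` and
the single swap rule `A + B → B + A`, `T` is reachable from `I` iff cells not holding
`A` or `B` are unchanged, cells hold a species of `{A, B}` in `I` iff they do in `T`,
and on each connected component of the induced subgraph on `{A, B}`-cells the number of
`A`-cells is the same in `I` and `T`. -/
theorem stmt6 {V S : Type*} [Fintype V] [DecidableEq V] [Fintype S] [DecidableEq S]
    (G : SimpleGraph V) (A B : S) (hAB : A ≠ B) (I T : V → S) :
    Reaches G {(A, B, B, A)} I T ↔
      (∀ v, I v ∉ ({A, B} : Set S) → T v = I v) ∧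
      (∀ v, I v ∈ ({A, B} : Set S) ↔ T v ∈ ({A, B} : Set S)) ∧
      (∀ K : (G.induce {v | I v ∈ ({A, B} : Set S)}).ConnectedComponent,
        {v | v ∈ K.supp ∧ I v.val = A}.ncard = {v | v ∈ K.supp ∧ T v.val = A}.ncard) := by
  constructor
  · intro h
    induction h with
    | refl => exact ⟨fun v _ => rfl, fun v => Iff.rfl, fun K => rfl⟩
    | tail hsteps hstep ih =>
      exact crn_fwd_step hAB G I _ _ ih.1 ih.2.1 ih.2.2 hstep
  · rintro ⟨c1, c2, c3⟩
    exact crn_back hAB G {v | I v ∈ ({A, B} : Set S)} T (fun x => (c2 x).symm)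
      (Finset.univ.filter fun x => I x ≠ T x).card I le_rfl
      (fun x hx => (c1 x hx).symm) (fun x => Iff.rfl) c3
end

section
/- Let G be a graph, let S be a finite species set containing two distinct species A and B, and let the only reaction rule be the swap reaction A + B → B + A. Let I be a configuration and v a cell. Then there exists a configuration T reachable from I with T(v) = A if and only if there exists a path v = v₀, v₁, …, v_k in G (possibly of length 0) such that I(v_k) = A and I(v_i) = B for all 0 ≤ i < k. -/
set_option linter.unusedSectionVars false

section Aux

variable {V S : Type*} [DecidableEq V] {G : SimpleGraph V}

/-- Every vertex of a walk's support is either in the `dropLast` or is the endpoint. -/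
lemma aux_mem_dropLast_or_eq : ∀ {v u : V} (p : G.Walk v u), ∀ w ∈ p.support,
    w ∈ p.support.dropLast ∨ w = u := by
  intro v u p
  induction p with
  | nil => intro w hw; right; simpa using hw
  | @cons v x u h q ih =>
      intro w hw
      rw [SimpleGraph.Walk.support_cons] at hw ⊢
      rw [List.dropLast_cons_of_ne_nil (SimpleGraph.Walk.support_ne_nil q)]
      rcases List.mem_cons.mp hw with rfl | hw
      · exact Or.inl List.mem_cons_self
      · rcases ih w hw with h' | h'
        · exact Or.inl (List.mem_cons_of_mem _ h')
        · exact Or.inr h'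

/-- In a path, vertices of the `dropLast` of the support differ from the endpoint. -/
lemma aux_ne_end : ∀ {v u : V} (p : G.Walk v u), p.IsPath →
    ∀ w ∈ p.support.dropLast, w ≠ u := by
  intro v u p
  induction p with
  | nil => intro _ w hw; simp at hw
  | @cons v x u h q ih =>
      intro hp w hw
      rw [SimpleGraph.Walk.support_cons,
        List.dropLast_cons_of_ne_nil (SimpleGraph.Walk.support_ne_nil q)] at hw
      rcases List.mem_cons.mp hw with rfl | hw
      · intro heq
        exact ((SimpleGraph.Walk.cons_isPath_iff h q).mp hp).2 (by rw [heq]; exact q.end_mem_support)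
      · exact ih ((SimpleGraph.Walk.cons_isPath_iff h q).mp hp).1 w hw

lemma aux_isPath_concat {v u w : V} (p : G.Walk v u) (h : G.Adj u w) (hp : p.IsPath)
    (hw : w ∉ p.support) : (p.concat h).IsPath := by
  rw [SimpleGraph.Walk.isPath_def, SimpleGraph.Walk.support_concat,
    List.nodup_append]
  refine ⟨hp.support_nodup, List.nodup_singleton w, ?_⟩
  intro x hx y hx' hxy
  rw [List.mem_singleton] at hx'
  exact hw (hx' ▸ hxy ▸ hx)

variable {A B : S}

lemma step_values {I T : V → S} (h : Step G {(A, B, B, A)} I T) (x : V) :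
    T x = I x ∨ T x = A ∨ T x = B := by
  obtain ⟨a, b, r, hr, hadj, hIa, hIb, rfl⟩ := h
  rw [Set.mem_singleton_iff] at hr
  subst hr
  by_cases hxb : x = b
  · subst hxb; right; left; simp
  · by_cases hxa : x = a
    · subst hxa; right; right
      rw [Function.update_of_ne hxb, Function.update_self]
    · left
      rw [Function.update_of_ne hxb, Function.update_of_ne hxa]

lemma reaches_values {I T : V → S} (h : Reaches G {(A, B, B, A)} I T) (x : V) :
    T x = I x ∨ T x = A ∨ T x = B := by
  induction h with
  | refl => left; rfl
  | tail _ hstep ih =>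
      rcases step_values hstep x with h' | h' | h'
      · rw [h']; exact ih
      · right; left; exact h'
      · right; right; exact h'

/-- Moving an `A` along a walk whose earlier vertices are all `B`. -/
lemma reaches_A : ∀ {v u : V} (p : G.Walk v u) (I : V → S), I u = A →
    (∀ w ∈ p.support.dropLast, I w = B) →
    ∃ T, Reaches G {(A, B, B, A)} I T ∧ T v = A := by
  intro v u p
  induction p with
  | nil => intro I h1 _; exact ⟨I, Relation.ReflTransGen.refl, h1⟩
  | @cons v x u h q ih =>
      intro I h1 h2
      have hdl : (SimpleGraph.Walk.cons h q).support.dropLast = v :: q.support.dropLast := by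
        rw [SimpleGraph.Walk.support_cons,
          List.dropLast_cons_of_ne_nil (SimpleGraph.Walk.support_ne_nil q)]
      have hIv : I v = B := h2 v (by rw [hdl]; exact List.mem_cons_self)
      obtain ⟨T, hT, hTx⟩ := ih I h1 (fun w hw => h2 w (by rw [hdl]; exact List.mem_cons_of_mem _ hw))
      by_cases hv : T v = A
      · exact ⟨T, hT, hv⟩
      · have hTv : T v = B := by
          rcases reaches_values hT v with h' | h' | h'
          · rw [h', hIv]
          · exact absurd h' hv
          · exact h'
        refine ⟨Function.update (Function.update T x B) v A, ?_, ?_⟩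
        · exact hT.tail ⟨x, v, (A, B, B, A), rfl, h.symm, hTx, hTv, rfl⟩
        · exact Function.update_self _ _ _

end Aux

/-- With a finite species set `S` containing distinct species `A` and `B` and the single
swap rule `A + B → B + A`, some configuration reachable from `I` has `A` at cell `v` iff
there is a path `v = v₀, v₁, …, v_k` in `G` (possibly of length 0) with `I v_k = A` and
`I v_i = B` for all `0 ≤ i < k`. -/
theorem stmt8 {V S : Type*} [DecidableEq V] [Fintype S] [DecidableEq S]
    (G : SimpleGraph V) (A B : S) (hAB : A ≠ B) (I : V → S) (v : V) :
    (∃ T, Reaches G {(A, B, B, A)} I T ∧ T v = A) ↔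
      ∃ (u : V) (p : G.Walk v u), p.IsPath ∧ I u = A ∧
        ∀ w ∈ p.support.dropLast, I w = B := by
  constructor
  · rintro ⟨T, hRT, hTv⟩
    -- induction from the head on the reachability
    refine Relation.ReflTransGen.head_induction_on (b := T) hRT ?_ ?_
    · exact ⟨v, SimpleGraph.Walk.nil, SimpleGraph.Walk.IsPath.nil, hTv, by simp⟩
    · rintro X Y ⟨a, b, r, hr, hadj, hXa, hXb, rfl⟩ _ ih
      rw [Set.mem_singleton_iff] at hr
      subst hr
      simp only at hXa hXb
      set Y : V → S := Function.update (Function.update X a B) b A with hYdef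
      have hab : a ≠ b := hadj.ne
      have hYb : Y b = A := Function.update_self _ _ _
      have hYa : Y a = B := by
        rw [hYdef, Function.update_of_ne hab, Function.update_self]
      have hYother : ∀ x, x ≠ a → x ≠ b → Y x = X x := by
        intro x hxa hxb
        rw [hYdef, Function.update_of_ne hxb, Function.update_of_ne hxa]
      obtain ⟨u, p, hp, hYu, hYdl⟩ := ih
      have hua : u ≠ a := by
        intro h; rw [h, hYa] at hYu; exact hAB hYu.symm
      have hdlb : ∀ w ∈ p.support.dropLast, w ≠ b := by
        intro w hw h
        have h2 := hYdl w hw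
        rw [h, hYb] at h2
        exact hAB h2
      by_cases ha : a ∈ p.support
      · -- truncate the path at `a`
        set q := p.takeUntil a ha with hq
        have hqp : q.IsPath := hp.takeUntil ha
        have hspec := p.take_spec ha
        set d := p.dropUntil a ha with hd
        have hsupp : p.support = q.support ++ d.support.tail := by
          rw [← SimpleGraph.Walk.support_append, hspec]
        have hmemtail : u ∈ d.support.tail := by
          have hm := d.end_mem_support
          rw [d.support_eq_cons] at hm
          rcases List.mem_cons.mp hm with h | h
          · exact absurd h hua
          · exact h
        have htail_ne : d.support.tail ≠ [] := List.ne_nil_of_mem hmemtail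
        have hsub : ∀ w ∈ q.support, w ∈ p.support.dropLast := by
          intro w hw
          rw [hsupp, List.dropLast_append_of_ne_nil htail_ne]
          exact List.mem_append_left _ hw
        refine ⟨a, q, hqp, hXa, ?_⟩
        intro w hw
        have hwq : w ∈ q.support := List.dropLast_subset _ hw
        have hwp : w ∈ p.support.dropLast := hsub w hwq
        have hwa : w ≠ a := aux_ne_end q hqp w hw
        rw [← hYother w hwa (hdlb w hwp)]
        exact hYdl w hwp
      · by_cases hub : u = b
        · subst hub
          refine ⟨a, p.concat hadj.symm, aux_isPath_concat p hadj.symm hp ha, hXa, ?_⟩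
          intro w hw
          rw [SimpleGraph.Walk.support_concat,
            List.dropLast_concat] at hw
          rcases aux_mem_dropLast_or_eq p w hw with hw' | rfl
          · have hwa : w ≠ a := fun h => ha (by rw [← h]; exact hw)
            rw [← hYother w hwa (hdlb w hw')]
            exact hYdl w hw'
          · exact hXb
        · refine ⟨u, p, hp, ?_, ?_⟩
          · rw [← hYother u hua hub]; exact hYu
          · intro w hw
            have hwa : w ≠ a := fun h => ha (by rw [← h]; exact List.dropLast_subset _ hw)
            rw [← hYother w hwa (hdlb w hw)]
            exact hYdl w hw
  · rintro ⟨u, p, _, hIu, hB⟩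
    exact reaches_A p I hIu hB
end

section
/- Let G be a graph, let the species set be {A, B, C}, and let the rule set consist of the two swap reactions A + C → C + A and B + C → C + B (so A and B cannot swap, but C swaps with both). Let I be a configuration and v a cell. Then there exists a configuration T reachable from I with T(v) = C if and only if some cell u in the connected component of v in G satisfies I(u) = C. -/
/-- In one step, a `C` at `w` was either already at `w` or at a neighbor of `w`. -/
lemma step_C {V : Type*} [DecidableEq V] {G : SimpleGraph V} {I T : V → Species}
    (h : Step G {(Species.A, Species.C, Species.C, Species.A),
        (Species.B, Species.C, Species.C, Species.B)} I T) (w : V) (hw : T w = Species.C) :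
    I w = Species.C ∨ ∃ w', G.Adj w w' ∧ I w' = Species.C := by
  obtain ⟨a, b, r, hr, hadj, ha, hb, hT⟩ := h
  have hab : a ≠ b := hadj.ne
  simp only [Set.mem_insert_iff, Set.mem_singleton_iff] at hr
  rcases hr with hr | hr <;> subst hr <;> subst hT <;>
  · by_cases hwb : w = b
    · subst hwb; simp [Function.update_self] at hw
    · by_cases hwa : w = a
      · subst hwa
        exact Or.inr ⟨b, hadj, hb⟩
      · left
        simpa [Function.update_of_ne hwb, Function.update_of_ne hwa] using hw

/-- Moving a `C` from the end of a walk back to its start. -/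
lemma walk_C {V : Type*} [DecidableEq V] {G : SimpleGraph V} :
    ∀ {v u : V}, G.Walk v u → ∀ I : V → Species, I u = Species.C →
    ∃ T, Reaches G {(Species.A, Species.C, Species.C, Species.A),
        (Species.B, Species.C, Species.C, Species.B)} I T ∧ T v = Species.C := by
  intro v u p
  induction p with
  | nil => exact fun I hI => ⟨I, Relation.ReflTransGen.refl, hI⟩
  | @cons v w u hadj q ih =>
    intro I hI
    obtain ⟨T, hT, hTw⟩ := ih I hI
    have hvw : v ≠ w := hadj.ne
    cases hTv : T v with
    | C => exact ⟨T, hT, hTv⟩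
    | A =>
        refine ⟨Function.update (Function.update T v Species.C) w Species.A, ?_, ?_⟩
        · exact hT.tail ⟨v, w, _, Or.inl rfl, hadj, hTv, hTw, rfl⟩
        · simp [Function.update_of_ne hvw, Function.update_self]
    | B =>
        refine ⟨Function.update (Function.update T v Species.C) w Species.B, ?_, ?_⟩
        · exact hT.tail ⟨v, w, _, Or.inr rfl, hadj, hTv, hTw, rfl⟩
        · simp [Function.update_of_ne hvw, Function.update_self]

/-- With species `{A, B, C}` and the two swap rules `A + C → C + A` and `B + C → C + B`,
some configuration reachable from `I` has `C` at cell `v` iff some cell in the connected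
component of `v` in `G` holds `C` in `I`. -/
theorem stmt9 {V : Type*} [DecidableEq V] (G : SimpleGraph V) (I : V → Species) (v : V) :
    (∃ T, Reaches G {(Species.A, Species.C, Species.C, Species.A),
        (Species.B, Species.C, Species.C, Species.B)} I T ∧ T v = Species.C) ↔
      ∃ u, G.Reachable v u ∧ I u = Species.C := by
  constructor
  · rintro ⟨T, hT, hTv⟩
    induction hT using Relation.ReflTransGen.head_induction_on with
    | refl => exact ⟨v, SimpleGraph.Reachable.refl v, hTv⟩
    | head hstep _ ih =>
        obtain ⟨u, hvu, huC⟩ := ih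
        rcases step_C hstep u huC with h | ⟨u', hadj, hC⟩
        · exact ⟨u, hvu, h⟩
        · exact ⟨u', hvu.trans hadj.reachable, hC⟩
  · rintro ⟨u, ⟨p⟩, hu⟩
    exact walk_C p I hu
end

section
/- Let G be a graph, let the species set be {A, B, C}, and let the rule set consist of the two swap reactions A + C → C + A and B + C → C + B. Let I be a configuration and v a cell. For a cell u with I(u) = A, let I_u denote the configuration with I_u(u) = A, I_u(w) = B for every other cell w with I(w) = A, and I_u(w) = I(w) for all remaining cells. Then there exists a configuration T reachable from I with T(v) = A if and only if there exists a cell u with I(u) = A such that some configuration T' reachable from I_u satisfies T'(v) = A. -/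
/-- Simulation lemma: since both rules are swaps of a non-`C` species with `C`, any run
from `J` moves the tokens along a permutation `π`, and the same run can be replayed from
any configuration `J'` having the same set of `C`-cells, moving tokens by the same `π`. -/
lemma sim {V : Type*} [DecidableEq V] (G : SimpleGraph V) {J T : V → Species}
    (hr : Reaches G {(Species.A, Species.C, Species.C, Species.A),
        (Species.B, Species.C, Species.C, Species.B)} J T) :
    ∃ π : Equiv.Perm V, T = J ∘ π ∧
      ∀ J' : V → Species, (∀ w, J w = Species.C ↔ J' w = Species.C) →
        ∃ T', Reaches G {(Species.A, Species.C, Species.C, Species.A),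
            (Species.B, Species.C, Species.C, Species.B)} J' T' ∧ T' = J' ∘ π := by
  induction hr with
  | refl =>
    exact ⟨Equiv.refl V, rfl, fun J' _ => ⟨J', Relation.ReflTransGen.refl, rfl⟩⟩
  | @tail M U hTU hstep ih =>
    obtain ⟨π, hT, H⟩ := ih
    obtain ⟨x, y, r, hrR, hadj, hx, hy, hU⟩ := hstep
    have hrC : r.2.1 = Species.C ∧ r.2.2.1 = Species.C ∧ r.2.2.2 = r.1 ∧ r.1 ≠ Species.C := by
      rcases hrR with h1 | h1 <;> subst h1 <;> simp
    obtain ⟨h21, h221, h222, h1C⟩ := hrC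
    have hTx : M x = J (π x) := by rw [hT]; rfl
    have hTy : M y = J (π y) := by rw [hT]; rfl
    refine ⟨(Equiv.swap x y).trans π, ?_, ?_⟩
    · funext w
      rw [hU]
      by_cases hwy : w = y
      · subst hwy
        simp [Function.update, h222, ← hx, hTx, Equiv.swap_apply_right]
      · by_cases hwx : w = x
        · subst hwx
          simp [Function.update, hwy, h221, ← hTy, hy, h21, Equiv.swap_apply_left]
        · simp [Function.update, hwy, hwx]
          rw [hT]; simp [Function.comp, Equiv.swap_apply_of_ne_of_ne hwx hwy]
    · intro J' h
      obtain ⟨T', hT'r, hT'⟩ := H J' h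
      have hT'x : T' x = J' (π x) := by rw [hT']; rfl
      have hT'y : T' y = J' (π y) := by rw [hT']; rfl
      have hxC : T' x ≠ Species.C := by
        rw [hT'x]; intro hc
        exact h1C (hx ▸ (hTx ▸ ((h (π x)).2 hc) : M x = Species.C))
      have hyC : T' y = Species.C := by
        rw [hT'y]; exact (h (π y)).1 (hTy ▸ (hy.trans h21))
      have hrule : (T' x, Species.C, Species.C, T' x) ∈
          ({(Species.A, Species.C, Species.C, Species.A),
            (Species.B, Species.C, Species.C, Species.B)} :
            Set (Species × Species × Species × Species)) := by
        cases hsx : T' x with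
        | A => left; simp
        | B => right; simp
        | C => exact absurd hsx hxC
      set U' := Function.update (Function.update T' x Species.C) y (T' x) with hU'
      have hstep' : Step G {(Species.A, Species.C, Species.C, Species.A),
          (Species.B, Species.C, Species.C, Species.B)} T' U' :=
        ⟨x, y, (T' x, Species.C, Species.C, T' x), hrule, hadj, rfl, hyC, rfl⟩
      refine ⟨U', hT'r.tail hstep', ?_⟩
      funext w
      rw [hU']
      by_cases hwy : w = y
      · subst hwy
        simp [Function.update, hT'x, Equiv.swap_apply_right]
      · by_cases hwx : w = x
        · subst hwx
          simp [Function.update, hwy, ← hT'y, hyC, Equiv.swap_apply_left]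
        · simp [Function.update, hwy, hwx]
          rw [hT']; simp [Function.comp, Equiv.swap_apply_of_ne_of_ne hwx hwy]

/-- With species `{A, B, C}` and the two swap rules `A + C → C + A` and `B + C → C + B`,
some configuration reachable from `I` has `A` at cell `v` iff for some cell `u` holding
`A` in `I`, the modified configuration `I_u` (which keeps `A` only at `u`, replacing all
other `A`s by `B`) can reach a configuration with `A` at `v`. -/
theorem stmt10 {V : Type*} [DecidableEq V] (G : SimpleGraph V) (I : V → Species) (v : V) :
    (∃ T, Reaches G {(Species.A, Species.C, Species.C, Species.A),
        (Species.B, Species.C, Species.C, Species.B)} I T ∧ T v = Species.A) ↔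
      ∃ u, I u = Species.A ∧
        ∃ T', Reaches G {(Species.A, Species.C, Species.C, Species.A),
            (Species.B, Species.C, Species.C, Species.B)}
          (fun w => if w = u then Species.A
            else if I w = Species.A then Species.B else I w) T' ∧
        T' v = Species.A := by
  constructor
  · rintro ⟨T, hr, hv⟩
    obtain ⟨π, hT, H⟩ := sim G hr
    have hIu : I (π v) = Species.A := by
      have : T v = I (π v) := by rw [hT]; rfl
      rw [← this, hv]
    set u := π v with hu
    refine ⟨u, hIu, ?_⟩
    have hCiff : ∀ w, I w = Species.C ↔
        (if w = u then Species.A else if I w = Species.A then Species.B else I w) = Species.C := by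
      intro w
      by_cases hwu : w = u
      · subst hwu; simp [hIu]
      · by_cases hIw : I w = Species.A
        · simp [hwu, hIw]
        · simp [hwu, hIw]
    obtain ⟨T', hT'r, hT'⟩ := H _ hCiff
    refine ⟨T', hT'r, ?_⟩
    rw [hT']; simp [Function.comp, ← hu]
  · rintro ⟨u, hIu, T', hr', hv'⟩
    obtain ⟨π, hT', H⟩ := sim G hr'
    have hCiff : ∀ w,
        (if w = u then Species.A else if I w = Species.A then Species.B else I w) = Species.C ↔
        I w = Species.C := by
      intro w
      by_cases hwu : w = u
      · subst hwu; simp [hIu]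
      · by_cases hIw : I w = Species.A
        · simp [hwu, hIw]
        · simp [hwu, hIw]
    obtain ⟨T, hTr, hT⟩ := H I hCiff
    refine ⟨T, hTr, ?_⟩
    have hval : (if π v = u then Species.A
        else if I (π v) = Species.A then Species.B else I (π v)) = Species.A := by
      have h2 : T' v = (if π v = u then Species.A
          else if I (π v) = Species.A then Species.B else I (π v)) := by rw [hT']; rfl
      rw [← h2, hv']
    have hpv : π v = u := by
      by_contra hne
      rw [if_neg hne] at hval
      by_cases hIw : I (π v) = Species.A
      · rw [if_pos hIw] at hval; exact Species.noConfusion hval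
      · rw [if_neg hIw] at hval; exact hIw hval
    have : T v = I (π v) := by rw [hT]; rfl
    rw [this, hpv, hIu]
end

section
/- Let G be a finite graph with N cells, let the species set be {A, B, C}, and let the only reaction rule be A + B → C + A. Then in any sequence of reactions I = C₀ → C₁ → ⋯ → Cₙ, each cell changes its species at most twice (its successive values form a subsequence of B, A, C), and consequently the number of reactions satisfies n ≤ N. -/
def Tr (x y : Species) : Prop :=
  (x = .B ∧ y = .A) ∨ (x = .A ∧ y = .C)

def P (x y : Species) : Prop := x = y ∨ Tr x y

def tailFrom : Species → List Species
  | .B => [.B, .A, .C]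
  | .A => [.A, .C]
  | .C => [.C]

lemma aux1 : ∀ (l : List Species) (a : Species), List.Chain' P (a :: l) →
    (List.destutter' (· ≠ ·) a l).Sublist (tailFrom a) := by
  intro l
  induction l with
  | nil => intro a _; cases a <;> simp [tailFrom, List.destutter']
  | cons b l ih =>
    intro a hc
    unfold List.Chain' at hc
    rw [List.isChain_cons_cons] at hc
    obtain ⟨hab, hc⟩ := hc
    by_cases hne : a = b
    · subst hne
      rw [List.destutter']
      simp only [ne_eq, not_true_eq_false, if_neg, not_not]
      exact ih a hc

    · rw [List.destutter']
      simp only [ne_eq, hne, not_false_iff, if_pos]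
      have h2 := ih b hc
      rcases hab with h | h
      · exact absurd h hne
      · rcases h with ⟨ha, hb⟩ | ⟨ha, hb⟩ <;> subst ha <;> subst hb <;>
          simpa [tailFrom] using h2

lemma tailFrom_sub (a : Species) : (tailFrom a).Sublist [.B, .A, .C] := by
  cases a <;> simp [tailFrom]

lemma main_list (L : List Species) (hL : L.Chain' P) :
    (L.destutter (· ≠ ·)).Sublist [.B, .A, .C] := by
  cases L with
  | nil => simp
  | cons a l =>
    rw [List.destutter_cons']
    exact (aux1 l a hL).trans (tailFrom_sub a)

def rnk : Species → ℕ
  | .B => 0 | .A => 1 | .C => 2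

section
variable {V : Type*} [Fintype V] [DecidableEq V] (G : SimpleGraph V)

omit [Fintype V] in
lemma step_elim {I T : V → Species}
    (hs : Step G {(Species.A, Species.B, Species.C, Species.A)} I T) :
    ∃ u v, u ≠ v ∧ I u = .A ∧ I v = .B ∧
      T = Function.update (Function.update I u .C) v .A := by
  obtain ⟨u, v, r, hr, hadj, h1, h2, h3⟩ := hs
  simp only [Set.mem_singleton_iff] at hr
  subst hr
  exact ⟨u, v, hadj.ne, h1, h2, h3⟩

omit [Fintype V] in
lemma step_P {I T : V → Species}
    (hs : Step G {(Species.A, Species.B, Species.C, Species.A)} I T) (w : V) :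
    P (I w) (T w) := by
  obtain ⟨u, v, huv, hu, hv, hT⟩ := step_elim G hs
  subst hT
  by_cases hw : w = v
  · subst hw
    right; left
    simp [Function.update, hv]
  · by_cases hw2 : w = u
    · subst hw2
      right; right
      simp [Function.update_of_ne hw, hu]
    · left
      simp [Function.update_of_ne hw, Function.update_of_ne hw2]

lemma step_sum {I T : V → Species}
    (hs : Step G {(Species.A, Species.B, Species.C, Species.A)} I T) :
    ∑ w, rnk (T w) = (∑ w, rnk (I w)) + 2 := by
  obtain ⟨u, v, huv, hu, hv, hT⟩ := step_elim G hs
  subst hT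
  have key : ∀ w, rnk (Function.update (Function.update I u Species.C) v Species.A w)
      = rnk (I w) + ((if w = u then 1 else 0) + (if w = v then 1 else 0)) := by
    intro w
    by_cases hw : w = v
    · subst hw
      simp [Function.update_self, Ne.symm huv, hv, rnk, if_neg]
    · by_cases hw2 : w = u
      · subst hw2
        simp [Function.update_of_ne hw, hu, rnk, hw]
      · simp [Function.update_of_ne hw, Function.update_of_ne hw2, hw, hw2]
  simp only [key]
  rw [Finset.sum_add_distrib, Finset.sum_add_distrib]
  simp
end

/-- With species `{A, B, C}` and the single rule `A + B → C + A` on a finite graph with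
`N` cells, in any sequence of reactions `C₀ → C₁ → ⋯ → Cₙ` each cell changes species at
most twice — its successive values (with adjacent repetitions removed) form a subsequence
of `B, A, C` — and consequently `n ≤ N`. -/
theorem stmt13 {V : Type*} [Fintype V] [DecidableEq V] (G : SimpleGraph V)
    (n : ℕ) (Cs : ℕ → V → Species)
    (h : ∀ i < n, Step G {(Species.A, Species.B, Species.C, Species.A)}
      (Cs i) (Cs (i + 1))) :
    (∀ v, (((List.range (n + 1)).map (fun i => Cs i v)).destutter (· ≠ ·)).Sublist
        [Species.B, Species.A, Species.C]) ∧
      n ≤ Fintype.card V := by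
  constructor
  · intro v
    apply main_list
    unfold List.Chain'
    rw [List.isChain_map, List.isChain_range_succ]
    intro i hi
    exact step_P G (h i hi) v
  · have hsum : ∀ i ≤ n, 2 * i ≤ ∑ w, rnk (Cs i w) := by
      intro i hi
      induction i with
      | zero => simp
      | succ k ih =>
        have h1 := ih (Nat.le_of_succ_le hi)
        have h2 := step_sum G (h k (Nat.lt_of_succ_le hi))
        omega
    have h1 := hsum n le_rfl
    have h2 : ∑ w, rnk (Cs n w) ≤ 2 * Fintype.card V := by
      calc ∑ w, rnk (Cs n w) ≤ ∑ _w : V, 2 :=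
            Finset.sum_le_sum (fun w _ => by cases Cs n w <;> simp [rnk])
        _ = 2 * Fintype.card V := by simp [Finset.card_univ, mul_comm]
    omega
end
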